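/- arXiv:2605.03709 — 6 statements merged into one kernel-verified Lean document; each statement's English description precedes it below -/
import Mathlib

section
/- Let K ⊆ ℝ^(n+m) be a compact set that is partially convex in x (i.e., for every y₀ in the projection of K onto ℝ^m, the slice K_{y₀} = {x ∈ ℝ^n | (x, y₀) ∈ K} is convex). If z = (x_z, y_z) ∉ K, then there exist a vector v ∈ ℝ^n and scalars c, M ∈ ℝ such that the function p(x,y) = ⟨v, x⟩ + c + M‖y − y_z‖² satisfies p(w) ≥ 0 for all w ∈ K and p(z) < 0. -/
/-!
The slice `s = {x | (x, y_z) ∈ K}` is closed and convex and misses `x_z`, so Hahn–Banach gives an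
affine `g(x) = u - f x` that is positive on `s` and negative at `x_z`. The penalty `q(w) = ‖y - y_z‖²`
vanishes on `K` exactly over the slice, so `g` is positive on `K ∩ {q = 0}`; by compactness `q` is
bounded below by some `δ > 0` where `g ≤ 0`, and `g ≥ -B` on `K`, so `g + (B / δ) q ≥ 0` on `K`.
-/

open Set

theorem eq_of_sum_sq_sub_eq_zero {ι : Type*} [Fintype ι] {a b : ι → ℝ}
    (h : ∑ j, (a j - b j) ^ 2 = 0) : a = b := by
  simpa [sq, Finset.sum_mul_self_eq_zero_iff, sub_eq_zero, funext_iff] using h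

theorem IsCompact.exists_forall_nonneg_add_mul {X : Type*} [TopologicalSpace X] {K : Set X}
    (hK : IsCompact K) {g q : X → ℝ} (hg : Continuous g) (hq : Continuous q)
    (hq_nonneg : ∀ w ∈ K, 0 ≤ q w) (hpos : ∀ w ∈ K, q w = 0 → 0 < g w) :
    ∃ M, ∀ w ∈ K, 0 ≤ g w + M * q w := by
  obtain ⟨B, hB⟩ := hK.bddBelow_image hg.continuousOn
  have hgB : ∀ w ∈ K, B ≤ g w := fun w hw => hB (mem_image_of_mem g hw)
  have hT : IsCompact (K ∩ {w | g w ≤ 0}) := hK.inter_right (isClosed_le hg continuous_const)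
  obtain ⟨δ, hδ, hδq⟩ := hT.exists_forall_le' hq.continuousOn fun w ⟨hwK, hgw⟩ =>
    (hq_nonneg w hwK).lt_of_ne' fun h => (hpos w hwK h).not_ge hgw
  refine ⟨max 0 (-B) / δ, fun w hw => ?_⟩
  have hM : 0 ≤ max 0 (-B) / δ := by positivity
  rcases le_or_gt (g w) 0 with hgw | hgw
  · have : max 0 (-B) ≤ max 0 (-B) / δ * q w := by
      calc max 0 (-B) = max 0 (-B) / δ * δ := (div_mul_cancel₀ _ hδ.ne').symm
        _ ≤ _ := mul_le_mul_of_nonneg_left (hδq w ⟨hw, hgw⟩) hM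
    linarith [hgB w hw, le_max_right 0 (-B)]
  · linarith [mul_nonneg hM (hq_nonneg w hw)]

/-- Separation of a point from a compact partially convex set by a partially
affine polynomial `p(x,y) = ⟨v,x⟩ + c + M‖y − y_z‖²`. -/
theorem stmt_0 (n m : ℕ) (K : Set ((Fin n → ℝ) × (Fin m → ℝ)))
    (hK : IsCompact K)
    (hconv : ∀ y₀ : Fin m → ℝ, (∃ x, (x, y₀) ∈ K) →
      Convex ℝ {x : Fin n → ℝ | (x, y₀) ∈ K})
    (z : (Fin n → ℝ) × (Fin m → ℝ)) (hz : z ∉ K) :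
    ∃ (v : Fin n → ℝ) (c M : ℝ),
      (∀ w ∈ K, 0 ≤ (∑ i, v i * w.1 i) + c + M * ∑ j, (w.2 j - z.2 j) ^ 2) ∧
      (∑ i, v i * z.1 i) + c + M * ∑ j, (z.2 j - z.2 j) ^ 2 < 0 := by
  set s : Set (Fin n → ℝ) := {x | (x, z.2) ∈ K}
  have hs_closed : IsClosed s := hK.isClosed.preimage (Continuous.prodMk_left z.2)
  have hs_convex : Convex ℝ s := s.eq_empty_or_nonempty.elim (fun h => h ▸ convex_empty)
    fun ⟨x, hx⟩ => hconv z.2 ⟨x, hx⟩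
  obtain ⟨f, u, hfs, hfz⟩ := geometric_hahn_banach_closed_point hs_convex hs_closed hz
  have hf_coord : ∀ x, ∑ i, f (fun j => if i = j then 1 else 0) * x i = f x := fun x => by
    rw [← ContinuousLinearMap.coe_coe, LinearMap.pi_apply_eq_sum_univ (f : _ →ₗ[ℝ] ℝ) x]
    simp [mul_comm]
  obtain ⟨M, hM⟩ := hK.exists_forall_nonneg_add_mul (g := fun w => u - f w.1)
    (q := fun w => ∑ j, (w.2 j - z.2 j) ^ 2) (by fun_prop) (by fun_prop)
    (fun w _ => by positivity) fun w hw hq => by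
      have hws : w.1 ∈ s := by simpa [s, ← eq_of_sum_sq_sub_eq_zero hq] using hw
      exact sub_pos.mpr (hfs w.1 hws)
  refine ⟨fun i => -f (fun j => if i = j then 1 else 0), u, M, fun w hw => ?_, ?_⟩
  · simpa [hf_coord, neg_add_eq_sub] using hM w hw
  · simpa [hf_coord] using hfz
end

section
/- Let K ⊆ ℝ^(n+m) be a compact regular partially convex set, meaning K is closed, each slice K_y is convex with nonempty interior in ℝ^n, and the map y ↦ int(K_y) is lower hemicontinuous on Y = π_Y(K). If f is a continuous function on K that is affine in x for each fixed y, then there exist unique continuous functions c₀, c₁, …, c_n : Y → ℝ such that f(x,y) = c₀(y) + Σ_{i=1}^n cᵢ(y)xᵢ for all (x,y) ∈ K. -/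
/-!
On a slice `K_y`, the function `g = f(·, y)` agrees with the affine interpolant `ℓ` of its values
at an affine basis lying in `int K_y`, hence on the convex hull of that basis, which has nonempty
interior. Pushing a segment from any `x ∈ K_y` a little beyond an interior point `z` of that hull
writes `z` as a proper convex combination of `x` and a point where `g = ℓ`, so `g x = ℓ x`.
Uniqueness holds because an affine function vanishing on an open set is zero.

For continuity at `y`, lower hemicontinuity moves the simplex `x₀, x₀ + r eᵢ ⊆ int K_y` to
simplices in `int K_{y_k}` converging to it. The linear coefficients `c(y_k)` solve linear systems
whose matrices (the edge vectors) converge to the invertible matrix `r • 1` and whose right-hand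
sides (differences of values of `f`) converge by continuity of `f`; by Cramer's rule the solutions
converge to `c(y)`.
-/

open Filter Topology Set Matrix

def AffineOn {E : Type*} [AddCommGroup E] [Module ℝ E] (S : Set E) (g : E → ℝ) : Prop :=
  ∀ a b, a ∈ S → b ∈ S → ∀ t ∈ Icc (0 : ℝ) 1, g (t • a + (1 - t) • b) = t * g a + (1 - t) * g b

namespace AffineOn

section

variable {E : Type*} [AddCommGroup E] [Module ℝ E] {S : Set E} {g : E → ℝ}

theorem convex_setOf_eq (hg : AffineOn S g) (hS : Convex ℝ S) (ℓ : E →ᵃ[ℝ] ℝ) :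
    Convex ℝ {x ∈ S | g x = ℓ x} := by
  rintro a ⟨haS, ha⟩ b ⟨hbS, hb⟩ s t hs ht hst
  obtain rfl : t = 1 - s := by linarith
  refine ⟨hS haS hbS hs ht hst, ?_⟩
  rw [hg a b haS hbS s ⟨hs, by linarith⟩, Convex.combo_affine_apply hst, ha, hb, smul_eq_mul,
    smul_eq_mul]

theorem eqOn_of_eventually [TopologicalSpace E] [IsTopologicalAddGroup E] [ContinuousSMul ℝ E]
    (hg : AffineOn S g) (ℓ : E →ᵃ[ℝ] ℝ) {z : E} (hz : ∀ᶠ w in 𝓝 z, w ∈ S ∧ g w = ℓ w) :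
    EqOn g ℓ S := by
  intro x hx
  have hlim : Tendsto (fun ε : ℝ => z + ε • (z - x)) (𝓝[>] 0) (𝓝 z) := by
    have : Continuous fun ε : ℝ => z + ε • (z - x) := by fun_prop
    simpa using (this.tendsto 0).mono_left nhdsWithin_le_nhds
  obtain ⟨ε, ⟨hwS, hw⟩, hε⟩ := ((hlim.eventually hz).and self_mem_nhdsWithin).exists
  replace hε : 0 < ε := hε
  set w := z + ε • (z - x)
  set t := (1 + ε)⁻¹
  have ht1 : t * (1 + ε) = 1 := inv_mul_cancel₀ (by positivity)
  have ht : 0 < 1 - t := by rw [sub_pos]; exact inv_lt_one_of_one_lt₀ (by linarith)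
  have hz_eq : t • w + (1 - t) • x = z := by linear_combination (norm := module) ht1 • (z - x)
  have hg_z := hg w x hwS hx t ⟨by positivity, by linarith⟩
  have hℓ_z := Convex.combo_affine_apply (f := ℓ) (x := w) (y := x) (add_sub_cancel t 1)
  rw [hz_eq, hz.self_of_nhds.2, hw] at hg_z
  rw [hz_eq, smul_eq_mul, smul_eq_mul] at hℓ_z
  have : (1 - t) * (g x - ℓ x) = 0 := by linarith
  linarith [(mul_eq_zero.1 this).resolve_left ht.ne']

end

theorem exists_affineMap_eqOn {E : Type*} [NormedAddCommGroup E] [NormedSpace ℝ E]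
    [FiniteDimensional ℝ E] {S : Set E} {g : E → ℝ} (hg : AffineOn S g) (hS : Convex ℝ S)
    (hint : (interior S).Nonempty) : ∃ ℓ : E →ᵃ[ℝ] ℝ, EqOn g ℓ S := by
  obtain ⟨s, hsS, hind, htot⟩ := isOpen_interior.exists_subset_affineIndependent_span_eq_top hint
  let b : AffineBasis s ℝ E := ⟨(↑), hind, by simpa using htot⟩
  have := b.finite
  cases nonempty_fintype s
  classical
  let ℓ : E →ᵃ[ℝ] ℝ := (Fintype.linearCombination ℝ fun i => g (b i)).toAffineMap.comp b.coords
  have hℓ : ∀ i, g (b i) = ℓ (b i) := by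
    simp [ℓ, Fintype.linearCombination_apply, b.coords_apply, b.coord_apply]
  have hhull : convexHull ℝ s ⊆ {x ∈ S | g x = ℓ x} :=
    convexHull_min (fun x hx => ⟨interior_subset (hsS hx), hℓ ⟨x, hx⟩⟩) (hg.convex_setOf_eq hS ℓ)
  obtain ⟨z, hz⟩ := interior_convexHull_nonempty_iff_affineSpan_eq_top.2 htot
  exact ⟨ℓ, hg.eqOn_of_eventually ℓ (mem_of_superset (mem_interior_iff_mem_nhds.1 hz) hhull)⟩

end AffineOn

section Coordinates

variable {ι : Type*} [Fintype ι] [DecidableEq ι]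

theorem AffineMap.apply_eq_add_dotProduct {R : Type*} [CommRing R] (ℓ : (ι → R) →ᵃ[R] R)
    (x : ι → R) : ℓ x = ℓ 0 + (fun i => ℓ.linear (Pi.single i 1)) ⬝ᵥ x := by
  conv_lhs => rw [ℓ.decomp, Pi.add_apply, pi_eq_sum_univ' x]
  simp [dotProduct, add_comm, mul_comm]

theorem AffineOn.exists_add_dotProduct {S : Set (ι → ℝ)} {g : (ι → ℝ) → ℝ} (hg : AffineOn S g)
    (hS : Convex ℝ S) (hint : (interior S).Nonempty) :
    ∃ (a : ℝ) (v : ι → ℝ), ∀ x ∈ S, g x = a + v ⬝ᵥ x :=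
  let ⟨ℓ, hℓ⟩ := hg.exists_affineMap_eqOn hS hint
  ⟨ℓ 0, _, fun x hx => (hℓ hx).trans (ℓ.apply_eq_add_dotProduct x)⟩

theorem exists_pos_forall_add_single_mem {U : Set (ι → ℝ)} (hU : IsOpen U) {x : ι → ℝ}
    (hx : x ∈ U) : ∃ r > 0, ∀ i, x + Pi.single i r ∈ U := by
  obtain ⟨ε, hε, hball⟩ := Metric.isOpen_iff.1 hU x hx
  refine ⟨ε / 2, by positivity, fun i => hball ?_⟩
  rw [Metric.mem_ball, dist_eq_norm, add_sub_cancel_left, Pi.norm_single, Real.norm_eq_abs,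
    abs_of_pos (by positivity)]
  linarith

theorem eq_of_forall_add_dotProduct_eq {S : Set (ι → ℝ)} (hS : (interior S).Nonempty)
    {a a' : ℝ} {v v' : ι → ℝ} (h : ∀ x ∈ S, a + v ⬝ᵥ x = a' + v' ⬝ᵥ x) : a = a' ∧ v = v' := by
  obtain ⟨x, hx⟩ := hS
  obtain ⟨r, hr, hxr⟩ := exists_pos_forall_add_single_mem isOpen_interior hx
  have hx' := h x (interior_subset hx)
  have hv : v = v' := funext fun i => by
    have := h _ (interior_subset (hxr i))
    simp only [dotProduct_add, dotProduct_single] at this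
    exact mul_right_cancel₀ hr.ne' (by linarith)
  subst hv
  exact ⟨by linarith, rfl⟩

theorem tendsto_of_tendsto_mulVec {𝕜 α : Type*} [NormedField 𝕜] {l : Filter α}
    {A : α → Matrix ι ι 𝕜} {A₀ : Matrix ι ι 𝕜} {x : α → ι → 𝕜} {x₀ : ι → 𝕜}
    (hA : Tendsto A l (𝓝 A₀)) (hA₀ : A₀.det ≠ 0)
    (hAx : Tendsto (fun k => A k *ᵥ x k) l (𝓝 (A₀ *ᵥ x₀))) : Tendsto x l (𝓝 x₀) := by
  have hdet : Tendsto (fun k => (A k).det) l (𝓝 A₀.det) :=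
    (continuous_id.matrix_det.tendsto A₀).comp hA
  have hcramer : ∀ (B : Matrix ι ι 𝕜) y, B.det • y = B.adjugate *ᵥ (B *ᵥ y) := by
    intro B y
    rw [mulVec_mulVec, adjugate_mul, smul_mulVec, one_mulVec]
  have hdet_x : Tendsto (fun k => (A k).det • x k) l (𝓝 (A₀.det • x₀)) := by
    have hcont : Continuous fun p : Matrix ι ι 𝕜 × (ι → 𝕜) => p.1.adjugate *ᵥ p.2 :=
      continuous_fst.matrix_adjugate.matrix_mulVec continuous_snd
    rw [hcramer]
    exact ((hcont.tendsto _).comp (hA.prodMk_nhds hAx)).congr fun k => (hcramer _ _).symm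
  have hlim := (hdet.inv₀ hA₀).smul hdet_x
  rw [smul_smul, inv_mul_cancel₀ hA₀, one_smul] at hlim
  refine hlim.congr' ?_
  filter_upwards [hdet.eventually_ne hA₀] with k hk
  rw [smul_smul, inv_mul_cancel₀ hk, one_smul]

def slice {α β : Type*} (K : Set (α × β)) (y : β) : Set α := {x | (x, y) ∈ K}

theorem tendsto_coeffs_of_lowerHemicontinuous {T : Type*} [TopologicalSpace T]
    {K : Set ((ι → ℝ) × T)} {f : (ι → ℝ) × T → ℝ} (hf : ContinuousOn f K)
    {a : T → ℝ} {v : T → ι → ℝ} (hrep : ∀ p ∈ K, f p = a p.2 + v p.2 ⬝ᵥ p.1)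
    {y : T} {yk : ℕ → T} (hyk : Tendsto yk atTop (𝓝 y)) (hint : (interior (slice K y)).Nonempty)
    (hlhc : ∀ x ∈ interior (slice K y), ∃ xk : ℕ → ι → ℝ,
      (∀ k, xk k ∈ interior (slice K (yk k))) ∧ Tendsto xk atTop (𝓝 x)) :
    Tendsto (v ∘ yk) atTop (𝓝 (v y)) ∧ Tendsto (a ∘ yk) atTop (𝓝 (a y)) := by
  have hK : ∀ {x z}, x ∈ interior (slice K z) → (x, z) ∈ K :=
    fun hx => interior_subset (s := slice K _) hx
  have hfK : ∀ {x xk}, x ∈ interior (slice K y) → (∀ k, xk k ∈ interior (slice K (yk k))) →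
      Tendsto xk atTop (𝓝 x) → Tendsto (fun k => f (xk k, yk k)) atTop (𝓝 (f (x, y))) :=
    fun hx hxk hlim => (hf _ (hK hx)).tendsto.comp <| tendsto_nhdsWithin_iff.2
      ⟨hlim.prodMk_nhds hyk, Eventually.of_forall fun k => hK (hxk k)⟩
  have hmulVec : ∀ {z} {P : ι → ι → ℝ} {P₀ : ι → ℝ}, (∀ i, P i ∈ interior (slice K z)) →
      P₀ ∈ interior (slice K z) →
      (Matrix.of fun i => P i - P₀) *ᵥ v z = fun i => f (P i, z) - f (P₀, z) := by
    intro z P P₀ hP hP₀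
    ext i
    rw [hrep _ (hK (hP i)), hrep _ (hK hP₀), add_sub_add_left_eq_sub, ← dotProduct_sub,
      dotProduct_comm]
    rfl
  obtain ⟨x₀, hx₀⟩ := hint
  obtain ⟨r, hr, hxr⟩ := exists_pos_forall_add_single_mem isOpen_interior hx₀
  obtain ⟨X₀, hX₀K, hX₀⟩ := hlhc x₀ hx₀
  choose X hXK hX using fun i => hlhc _ (hxr i)
  have hA : Tendsto (fun k => Matrix.of fun i => X i k - X₀ k) atTop
      (𝓝 (Matrix.of fun i => (x₀ + Pi.single i r) - x₀)) :=
    tendsto_pi_nhds.2 fun i => (hX i).sub hX₀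
  have hA₀ : (Matrix.of fun i => (x₀ + Pi.single i r) - x₀).det ≠ 0 := by
    have : (Matrix.of fun i => (x₀ + Pi.single i r) - x₀) = Matrix.diagonal fun _ => r := by
      ext i j
      simp [Matrix.diagonal_apply, Pi.single_apply, eq_comm]
    rw [this, det_diagonal, Finset.prod_const]
    exact pow_ne_zero _ hr.ne'
  have hv : Tendsto (v ∘ yk) atTop (𝓝 (v y)) := by
    refine tendsto_of_tendsto_mulVec hA hA₀ ?_
    rw [hmulVec hxr hx₀]
    refine (tendsto_pi_nhds.2 fun i => (hfK (hxr i) (hXK i) (hX i)).sub (hfK hx₀ hX₀K hX₀)).congr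
      fun k => (hmulVec (fun i => hXK i k) (hX₀K k)).symm
  have ha : ∀ {x z}, x ∈ interior (slice K z) → a z = f (x, z) - v z ⬝ᵥ x := fun hx => by
    rw [hrep _ (hK hx)]
    ring
  refine ⟨hv, ?_⟩
  simp only [Function.comp_def, ha (hX₀K _), ha hx₀]
  exact (hfK hx₀ hX₀K hX₀).sub
    (((continuous_fst.dotProduct continuous_snd).tendsto _).comp (hv.prodMk_nhds hX₀))

end Coordinates

theorem continuousOn_of_forall_tendsto_comp {X Z : Type*} [TopologicalSpace X]
    [FirstCountableTopology X] [TopologicalSpace Z] {s : Set X} {g : X → Z}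
    (h : ∀ y ∈ s, ∀ u : ℕ → X, (∀ k, u k ∈ s) → Tendsto u atTop (𝓝 y) →
      Tendsto (g ∘ u) atTop (𝓝 (g y))) : ContinuousOn g s := by
  rw [continuousOn_iff_continuous_domRestrict, continuous_iff_seqContinuous]
  intro u y hu
  exact h y y.2 _ (fun k => (u k).2) (tendsto_subtype_rng.1 hu)

theorem stmt_7_general (n m : ℕ) (K : Set ((Fin n → ℝ) × (Fin m → ℝ)))
    (hconv : ∀ y : Fin m → ℝ, Convex ℝ {x : Fin n → ℝ | (x, y) ∈ K})
    (Y : Set (Fin m → ℝ)) (hY : Y = Prod.snd '' K)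
    (hint : ∀ y ∈ Y, (interior {x : Fin n → ℝ | (x, y) ∈ K}).Nonempty)
    (hlhc : ∀ y ∈ Y, ∀ yk : ℕ → (Fin m → ℝ), (∀ k, yk k ∈ Y) →
      Filter.Tendsto yk Filter.atTop (nhds y) →
      ∀ x ∈ interior {x : Fin n → ℝ | (x, y) ∈ K},
        ∃ xk : ℕ → (Fin n → ℝ),
          (∀ k, xk k ∈ interior {x : Fin n → ℝ | (x, yk k) ∈ K}) ∧
          Filter.Tendsto xk Filter.atTop (nhds x))
    (f : (Fin n → ℝ) × (Fin m → ℝ) → ℝ) (hf : ContinuousOn f K)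
    (haff : ∀ (y : Fin m → ℝ) (x₁ x₂ : Fin n → ℝ), (x₁, y) ∈ K → (x₂, y) ∈ K →
      ∀ t ∈ Set.Icc (0:ℝ) 1,
        f (t • x₁ + (1 - t) • x₂, y) = t * f (x₁, y) + (1 - t) * f (x₂, y)) :
    ∃ (c₀ : (Fin m → ℝ) → ℝ) (c : Fin n → (Fin m → ℝ) → ℝ),
      ContinuousOn c₀ Y ∧ (∀ i, ContinuousOn (c i) Y) ∧
      (∀ p ∈ K, f p = c₀ p.2 + ∑ i, c i p.2 * p.1 i) ∧
      (∀ (d₀ : (Fin m → ℝ) → ℝ) (d : Fin n → (Fin m → ℝ) → ℝ),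
        (∀ p ∈ K, f p = d₀ p.2 + ∑ i, d i p.2 * p.1 i) →
        ∀ y ∈ Y, d₀ y = c₀ y ∧ ∀ i, d i y = c i y) := by
  have hYK : ∀ y, ∀ x ∈ slice K y, y ∈ Y := fun y x hx => hY ▸ ⟨(x, y), hx, rfl⟩
  have hrep : ∀ y, ∃ (a : ℝ) (v : Fin n → ℝ), ∀ x ∈ slice K y, f (x, y) = a + v ⬝ᵥ x := by
    intro y
    by_cases hy : y ∈ Y
    · exact AffineOn.exists_add_dotProduct (haff y) (hconv y) (hint y hy)
    · exact ⟨0, 0, fun x hx => absurd (hYK y x hx) hy⟩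
  choose c₀ c hc using hrep
  have hcK : ∀ p ∈ K, f p = c₀ p.2 + c p.2 ⬝ᵥ p.1 := fun p hp => hc p.2 p.1 hp
  have hlim : ∀ y ∈ Y, ∀ yk : ℕ → Fin m → ℝ, (∀ k, yk k ∈ Y) → Tendsto yk atTop (𝓝 y) →
      Tendsto (c ∘ yk) atTop (𝓝 (c y)) ∧ Tendsto (c₀ ∘ yk) atTop (𝓝 (c₀ y)) :=
    fun y hy yk hykY hyk =>
      tendsto_coeffs_of_lowerHemicontinuous hf hcK hyk (hint y hy) (hlhc y hy yk hykY hyk)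
  have hc₀_cont : ContinuousOn c₀ Y :=
    continuousOn_of_forall_tendsto_comp fun y hy yk hykY hyk => (hlim y hy yk hykY hyk).2
  have hc_cont : ContinuousOn c Y :=
    continuousOn_of_forall_tendsto_comp fun y hy yk hykY hyk => (hlim y hy yk hykY hyk).1
  refine ⟨c₀, fun i y => c y i, hc₀_cont, fun i => (continuous_apply i).comp_continuousOn hc_cont,
    hcK, fun d₀ d hd y hy => ?_⟩
  obtain ⟨h₀, h⟩ := eq_of_forall_add_dotProduct_eq (a := d₀ y) (v := fun i => d i y) (hint y hy)
    fun x hx => (hd (x, y) hx).symm.trans (hc y x hx)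
  exact ⟨h₀, fun i => congrFun h i⟩

/-- On a compact regular partially convex set, every continuous partially affine
function has a unique representation `f(x,y) = c₀(y) + Σᵢ cᵢ(y)xᵢ` with
continuous coefficients on `Y = π_Y(K)`. -/
theorem stmt_7 (n m : ℕ) (K : Set ((Fin n → ℝ) × (Fin m → ℝ)))
    (hKc : IsCompact K) (hKcl : IsClosed K)
    (hconv : ∀ y : Fin m → ℝ, Convex ℝ {x : Fin n → ℝ | (x, y) ∈ K})
    (Y : Set (Fin m → ℝ)) (hY : Y = Prod.snd '' K)
    (hint : ∀ y ∈ Y, (interior {x : Fin n → ℝ | (x, y) ∈ K}).Nonempty)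
    (hlhc : ∀ y ∈ Y, ∀ yk : ℕ → (Fin m → ℝ), (∀ k, yk k ∈ Y) →
      Filter.Tendsto yk Filter.atTop (nhds y) →
      ∀ x ∈ interior {x : Fin n → ℝ | (x, y) ∈ K},
        ∃ xk : ℕ → (Fin n → ℝ),
          (∀ k, xk k ∈ interior {x : Fin n → ℝ | (x, yk k) ∈ K}) ∧
          Filter.Tendsto xk Filter.atTop (nhds x))
    (f : (Fin n → ℝ) × (Fin m → ℝ) → ℝ) (hf : ContinuousOn f K)
    (haff : ∀ (y : Fin m → ℝ) (x₁ x₂ : Fin n → ℝ), (x₁, y) ∈ K → (x₂, y) ∈ K →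
      ∀ t ∈ Set.Icc (0:ℝ) 1,
        f (t • x₁ + (1 - t) • x₂, y) = t * f (x₁, y) + (1 - t) * f (x₂, y)) :
    ∃ (c₀ : (Fin m → ℝ) → ℝ) (c : Fin n → (Fin m → ℝ) → ℝ),
      ContinuousOn c₀ Y ∧ (∀ i, ContinuousOn (c i) Y) ∧
      (∀ p ∈ K, f p = c₀ p.2 + ∑ i, c i p.2 * p.1 i) ∧
      (∀ (d₀ : (Fin m → ℝ) → ℝ) (d : Fin n → (Fin m → ℝ) → ℝ),
        (∀ p ∈ K, f p = d₀ p.2 + ∑ i, d i p.2 * p.1 i) →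
        ∀ y ∈ Y, d₀ y = c₀ y ∧ ∀ i, d i y = c i y) :=
  stmt_7_general n m K hconv Y hY hint hlhc f hf haff
end

section
/- Let K ⊆ ℝ^(n+m) be a compact regular partially convex set. Then the space of partially affine polynomials (polynomials of the form p(x,y) = c₀(y) + Σᵢ cᵢ(y)xᵢ with polynomial coefficients cᵢ) is dense in the space of continuous partially affine functions on K with respect to the supremum norm. -/
/-!
On each slice `K_y` the function `f(·, y)` is affine along segments, and a convex set with
nonempty interior carries no other such functions than restrictions of affine maps: subtracting
the affine interpolant at `x₀` and `x₀ + δ eᵢ` leaves a function that vanishes on the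
cross-polytope spanned by `x₀ ± δ eᵢ`, hence on a ball, hence everywhere. This gives
`f(x, y) = c₀(y) + c(y) ⬝ᵥ x`. The coefficients are continuous: near `y`, lower hemicontinuity
of `y ↦ int K_y` moves the `n + 1` interpolation points into `K_{yₖ}`, where `c(yₖ)` solves a
linear system whose matrix tends to an invertible one. Stone–Weierstrass on the compact
projection of `K` then approximates `c₀` and `c` by polynomials.
-/

open Filter Metric Set Topology Matrix

section Affine

variable {E : Type*} [AddCommGroup E] [Module ℝ E]

def IsAffineOn (C : Set E) (g : E → ℝ) : Prop :=
  ∀ x₁ ∈ C, ∀ x₂ ∈ C, ∀ t ∈ Icc (0 : ℝ) 1,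
    g (t • x₁ + (1 - t) • x₂) = t * g x₁ + (1 - t) * g x₂

variable {C : Set E} {g φ : E → ℝ}

lemma IsAffineOn.sub (hg : IsAffineOn C g) (hφ : IsAffineOn C φ) :
    IsAffineOn C (fun x => g x - φ x) := by
  intro x₁ h₁ x₂ h₂ t ht
  dsimp only
  rw [hg x₁ h₁ x₂ h₂ t ht, hφ x₁ h₁ x₂ h₂ t ht]
  ring

lemma IsAffineOn.convex_zeroSet (hC : Convex ℝ C) (hg : IsAffineOn C g) :
    Convex ℝ {x ∈ C | g x = 0} := by
  rintro x₁ ⟨h₁, hx₁⟩ x₂ ⟨h₂, hx₂⟩ a b ha hb hab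
  obtain rfl : b = 1 - a := by linarith
  refine ⟨hC h₁ h₂ ha hb hab, ?_⟩
  rw [hg x₁ h₁ x₂ h₂ a ⟨ha, by linarith⟩, hx₁, hx₂]
  ring

lemma isAffineOn_const_add_dotProduct {n : ℕ} (C : Set (Fin n → ℝ)) (a : ℝ) (c : Fin n → ℝ) :
    IsAffineOn C (fun x => a + c ⬝ᵥ x) := by
  intro x₁ _ x₂ _ t _
  simp only [dotProduct_add, dotProduct_smul, smul_eq_mul]
  ring

end Affine

section Normed

variable {E : Type*} [NormedAddCommGroup E] [NormedSpace ℝ E] {C : Set E} {g : E → ℝ}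

/-- `x₀` lies strictly between `x` and a point of the ball on the far side of `x₀`. -/
lemma IsAffineOn.eqOn_zero_of_closedBall {x₀ : E} {r : ℝ} (hg : IsAffineOn C g) (hr : 0 < r)
    (hball : closedBall x₀ r ⊆ C) (hzero : EqOn g 0 (closedBall x₀ r)) : EqOn g 0 C := by
  intro x hx
  rcases eq_or_ne x x₀ with rfl | hne
  · exact hzero (mem_closedBall_self hr.le)
  have hu : 0 < ‖x - x₀‖ := norm_pos_iff.2 (sub_ne_zero.2 hne)
  set s := r / ‖x - x₀‖ with hs
  have hs0 : 0 < s := div_pos hr hu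
  have hy : x₀ - s • (x - x₀) ∈ closedBall x₀ r := by
    rw [mem_closedBall, dist_eq_norm, sub_sub_cancel_left, norm_neg, norm_smul,
      Real.norm_of_nonneg hs0.le, hs, div_mul_cancel₀ _ hu.ne']
  have hcomb : (s / (1 + s)) • x + (1 - s / (1 + s)) • (x₀ - s • (x - x₀)) = x₀ := by
    have : 1 + s ≠ 0 := by positivity
    match_scalars <;> field_simp <;> ring
  have key := hg x hx _ (hball hy) (s / (1 + s))
    ⟨by positivity, (div_le_one (by positivity)).2 (by linarith)⟩
  rw [hcomb, hzero (mem_closedBall_self hr.le), hzero hy] at key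
  have : s / (1 + s) ≠ 0 := by positivity
  simpa [this] using key.symm

end Normed

section Coordinates

variable {n : ℕ} {C : Set (Fin n → ℝ)} {g : (Fin n → ℝ) → ℝ}

lemma IsAffineOn.mem_zeroSet_of_axes (hC : Convex ℝ C) (hg : IsAffineOn C g)
    {x₀ : Fin n → ℝ} {δ : ℝ} (hδ : 0 < δ) (hball : closedBall x₀ δ ⊆ C) (h₀ : g x₀ = 0)
    (haxes : ∀ i, g (x₀ + Pi.single i δ) = 0) (i : Fin n) {s : ℝ} (hs : |s| ≤ δ) :
    x₀ + Pi.single i s ∈ {x ∈ C | g x = 0} := by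
  have hax : ∀ t : ℝ, |t| ≤ δ → x₀ + Pi.single i t ∈ C := fun t ht => hball <| by
    rwa [mem_closedBall, dist_eq_norm, add_sub_cancel_left, Pi.norm_single]
  have hplus : x₀ + Pi.single i δ ∈ C := hax δ (abs_of_pos hδ).le
  have hminus : x₀ + Pi.single i (-δ) ∈ C := hax (-δ) (by rw [abs_neg, abs_of_pos hδ])
  have hminus_zero : g (x₀ + Pi.single i (-δ)) = 0 := by
    have key := hg _ hplus _ hminus (1 / 2) ⟨by norm_num, by norm_num⟩
    have hmid : (1 / 2 : ℝ) • (x₀ + Pi.single i δ) + (1 - 1 / 2 : ℝ) • (x₀ + Pi.single i (-δ))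
        = x₀ := by
      rw [Pi.single_neg]; module
    rw [hmid, h₀, haxes i] at key
    linarith
  refine (hg.convex_zeroSet hC).segment_subset ⟨hminus, hminus_zero⟩ ⟨hplus, haxes i⟩
    ⟨(δ - s) / (2 * δ), (δ + s) / (2 * δ), ?_, ?_, ?_, ?_⟩
  · exact div_nonneg (by linarith [le_abs_self s]) (by positivity)
  · exact div_nonneg (by linarith [neg_abs_le s]) (by positivity)
  · field_simp; ring
  · ext j
    rcases eq_or_ne j i with rfl | hj
    · simp only [Pi.add_apply, Pi.smul_apply, Pi.single_eq_same, smul_eq_mul]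
      field_simp
      ring
    · simp only [Pi.add_apply, Pi.smul_apply, Pi.single_eq_of_ne hj, smul_eq_mul]
      field_simp
      ring

/-- The ball of radius `δ / (n + 1)` lies in the convex hull of the points `x₀ ± δ eᵢ`. -/
lemma IsAffineOn.eqOn_zero_closedBall_of_axes (hC : Convex ℝ C) (hg : IsAffineOn C g)
    {x₀ : Fin n → ℝ} {δ : ℝ} (hδ : 0 < δ) (hball : closedBall x₀ δ ⊆ C) (h₀ : g x₀ = 0)
    (haxes : ∀ i, g (x₀ + Pi.single i δ) = 0) : EqOn g 0 (closedBall x₀ (δ / (n + 1))) := by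
  intro x hx
  have hn : (0 : ℝ) < n + 1 := by positivity
  set w : ℝ := (n + 1 : ℝ)⁻¹
  set p : Option (Fin n) → Fin n → ℝ :=
    fun o => o.elim x₀ fun i => x₀ + Pi.single i ((n + 1) * (x - x₀) i)
  have hp : ∀ o ∈ Finset.univ, p o ∈ {x ∈ C | g x = 0} := by
    rintro (_ | i) -
    · exact ⟨hball (mem_closedBall_self hδ.le), h₀⟩
    · refine hg.mem_zeroSet_of_axes hC hδ hball h₀ haxes i ?_
      rw [abs_mul, abs_of_pos hn, ← le_div_iff₀' hn]
      exact (norm_le_pi_norm (x - x₀) i).trans (by rwa [← dist_eq_norm])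
  have hw : ∑ _o : Option (Fin n), w = 1 := by
    simp only [Finset.sum_const, Finset.card_univ, Fintype.card_option, Fintype.card_fin,
      nsmul_eq_mul, Nat.cast_add, Nat.cast_one, w]
    exact mul_inv_cancel₀ hn.ne'
  have hx_eq : ∑ o, w • p o = x := by
    ext j
    simp only [p, w, Fintype.sum_option, Option.elim, Finset.sum_apply, Pi.add_apply,
      Pi.smul_apply, smul_eq_mul, mul_add, Finset.sum_add_distrib, Pi.single_apply, mul_ite,
      mul_zero, Finset.sum_ite_eq, Finset.mem_univ, if_true, Finset.sum_const, Finset.card_univ,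
      Fintype.card_fin, nsmul_eq_mul, Pi.sub_apply]
    field_simp
    ring
  have hxZ := (hg.convex_zeroSet hC).sum_mem (fun _ _ => by positivity) hw hp
  rw [hx_eq] at hxZ
  exact hxZ.2

theorem IsAffineOn.exists_eqOn_const_add_dotProduct (hC : Convex ℝ C) (hg : IsAffineOn C g)
    (hint : (interior C).Nonempty) : ∃ (a : ℝ) (c : Fin n → ℝ), ∀ x ∈ C, g x = a + c ⬝ᵥ x := by
  obtain ⟨x₀, hx₀⟩ := hint
  obtain ⟨δ, hδ, hball⟩ := nhds_basis_closedBall.mem_iff.1 (mem_interior_iff_mem_nhds.1 hx₀)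
  set c : Fin n → ℝ := fun i => (g (x₀ + Pi.single i δ) - g x₀) / δ
  set a := g x₀ - c ⬝ᵥ x₀
  refine ⟨a, c, fun x hx => sub_eq_zero.1 ?_⟩
  have hh := hg.sub (isAffineOn_const_add_dotProduct C a c)
  refine hh.eqOn_zero_of_closedBall (by positivity)
    ((closedBall_subset_closedBall (div_le_self hδ.le (by linarith))).trans hball)
    (hh.eqOn_zero_closedBall_of_axes hC hδ hball ?_ fun i => ?_) hx
  · simp [a]
  · simp only [dotProduct_add, dotProduct_single, a, c]
    field_simp
    ring

end Coordinates

theorem Matrix.tendsto_of_mulVec_eq {𝕜 ι α : Type*} [Field 𝕜] [TopologicalSpace 𝕜]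
    [IsTopologicalRing 𝕜] [ContinuousInv₀ 𝕜] [T1Space 𝕜] [Fintype ι] [DecidableEq ι]
    {l : Filter α} {M : α → Matrix ι ι 𝕜} {A : Matrix ι ι 𝕜} {v b : α → ι → 𝕜} {v₀ : ι → 𝕜}
    (hM : Tendsto M l (𝓝 A)) (hA : A.det ≠ 0) (hMv : ∀ a, M a *ᵥ v a = b a)
    (hb : Tendsto b l (𝓝 (A *ᵥ v₀))) : Tendsto v l (𝓝 v₀) := by
  have hdet : ∀ᶠ a in l, (M a).det ≠ 0 :=
    ((continuous_id.matrix_det.tendsto A).comp hM).eventually_ne hA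
  have hinv : Tendsto (fun a => (M a)⁻¹) l (𝓝 A⁻¹) := by
    refine (continuousAt_matrix_inv A ?_).tendsto.comp hM
    rw [Ring.inverse_eq_inv']
    exact continuousAt_inv₀ hA
  have hlim := (continuous_fst.matrix_mulVec continuous_snd).tendsto (A⁻¹, A *ᵥ v₀)
    |>.comp (hinv.prodMk_nhds hb)
  rw [mulVec_mulVec, nonsing_inv_mul _ (isUnit_iff_ne_zero.2 hA), one_mulVec] at hlim
  refine hlim.congr' (hdet.mono fun a ha => ?_)
  simp only [Function.comp_apply, ← hMv a, mulVec_mulVec,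
    nonsing_inv_mul _ (isUnit_iff_ne_zero.2 ha), one_mulVec]

section Hemicontinuity

variable {X Z : Type*} [TopologicalSpace X] [TopologicalSpace Z]

def SeqLowerHemicontinuousOn (F : X → Set Z) (Y : Set X) : Prop :=
  ∀ y ∈ Y, ∀ yk : ℕ → X, (∀ k, yk k ∈ Y) → Tendsto yk atTop (𝓝 y) →
    ∀ x ∈ F y, ∃ xk : ℕ → Z, (∀ k, xk k ∈ F (yk k)) ∧ Tendsto xk atTop (𝓝 x)

theorem continuousOn_of_forall_seq_tendsto [FrechetUrysohnSpace X] {u : X → Z} {Y : Set X}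
    (hu : ∀ y ∈ Y, ∀ yk : ℕ → X, (∀ k, yk k ∈ Y) → Tendsto yk atTop (𝓝 y) →
      Tendsto (u ∘ yk) atTop (𝓝 (u y))) : ContinuousOn u Y := by
  refine continuousOn_iff_continuous_domRestrict.2 (continuous_iff_seqContinuous.2 ?_)
  intro yk y hyk
  exact hu y y.2 _ (fun k => (yk k).2) ((continuous_subtype_val.tendsto y).comp hyk)

end Hemicontinuity

theorem ContinuousOn.tendsto_prodMk {α X Y Z : Type*} [TopologicalSpace X] [TopologicalSpace Y]
    [TopologicalSpace Z] {f : X × Y → Z} {K : Set (X × Y)} (hf : ContinuousOn f K)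
    {l : Filter α} {u : α → X} {v : α → Y} {x : X} {y : Y} (hu : Tendsto u l (𝓝 x))
    (hv : Tendsto v l (𝓝 y)) (huv : ∀ a, (u a, v a) ∈ K) (hxy : (x, y) ∈ K) :
    Tendsto (fun a => f (u a, v a)) l (𝓝 (f (x, y))) :=
  (hf _ hxy).tendsto.comp (tendsto_nhdsWithin_iff.2 ⟨hu.prodMk_nhds hv, .of_forall huv⟩)

section Coefficients

variable {n m : ℕ} {K : Set ((Fin n → ℝ) × (Fin m → ℝ))} {Y : Set (Fin m → ℝ)}
  {f : (Fin n → ℝ) × (Fin m → ℝ) → ℝ} {c₀ : (Fin m → ℝ) → ℝ} {c : (Fin m → ℝ) → Fin n → ℝ}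
  {y : Fin m → ℝ} {yk : ℕ → Fin m → ℝ}

lemma mem_of_mem_interior_slice {x : Fin n → ℝ} (hx : x ∈ interior {x | (x, y) ∈ K}) :
    (x, y) ∈ K :=
  interior_subset (s := {x | (x, y) ∈ K}) hx

theorem tendsto_linearCoeff_comp (hint : ∀ y ∈ Y, (interior {x | (x, y) ∈ K}).Nonempty)
    (hlhc : SeqLowerHemicontinuousOn (fun y => interior {x | (x, y) ∈ K}) Y)
    (hf : ContinuousOn f K) (hrep : ∀ y ∈ Y, ∀ x, (x, y) ∈ K → f (x, y) = c₀ y + c y ⬝ᵥ x)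
    (hy : y ∈ Y) (hykY : ∀ k, yk k ∈ Y) (hyk : Tendsto yk atTop (𝓝 y)) :
    Tendsto (c ∘ yk) atTop (𝓝 (c y)) := by
  have hdiff : ∀ y' ∈ Y, ∀ u v, (u, y') ∈ K → (v, y') ∈ K →
      f (u, y') - f (v, y') = (u - v) ⬝ᵥ c y' := fun y' hy' u v hu hv => by
    rw [hrep y' hy' u hu, hrep y' hy' v hv, sub_dotProduct, dotProduct_comm u, dotProduct_comm v]
    ring
  obtain ⟨x₀, hx₀⟩ := hint y hy
  obtain ⟨δ, hδ, hball⟩ := nhds_basis_closedBall.mem_iff.1 (isOpen_interior.mem_nhds hx₀)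
  set p : Fin n → Fin n → ℝ := fun i => x₀ + Pi.single i δ
  have hp : ∀ i, p i ∈ interior {x | (x, y) ∈ K} := fun i => hball <| by
    rw [mem_closedBall, dist_eq_norm, add_sub_cancel_left, Pi.norm_single,
      Real.norm_of_nonneg hδ.le]
  obtain ⟨z₀, hz₀, hz₀lim⟩ := hlhc y hy yk hykY hyk x₀ hx₀
  choose z hz hzlim using fun i => hlhc y hy yk hykY hyk (p i) (hp i)
  set A : Matrix (Fin n) (Fin n) ℝ := Matrix.of fun i => p i - x₀
  have hA : A.det ≠ 0 := by
    have : A = Matrix.diagonal fun _ => δ := by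
      ext i j
      simp [A, p, Pi.single_apply, Matrix.diagonal_apply, eq_comm]
    rw [this, det_diagonal]
    exact Finset.prod_ne_zero_iff.2 fun _ _ => hδ.ne'
  have hb : A *ᵥ c y = fun i => f (p i, y) - f (x₀, y) := funext fun i =>
    (hdiff y hy _ _ (mem_of_mem_interior_slice (hp i)) (mem_of_mem_interior_slice hx₀)).symm
  refine tendsto_of_mulVec_eq (M := fun k => Matrix.of fun i => z i k - z₀ k)
    (b := fun k i => f (z i k, yk k) - f (z₀ k, yk k)) ?_ hA (fun k => funext fun i =>
      (hdiff _ (hykY k) _ _ (mem_of_mem_interior_slice (hz i k))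
        (mem_of_mem_interior_slice (hz₀ k))).symm) (hb ▸ ?_)
  · exact tendsto_pi_nhds.2 fun i => (hzlim i).sub hz₀lim
  · exact tendsto_pi_nhds.2 fun i =>
      (hf.tendsto_prodMk (hzlim i) hyk (fun k => mem_of_mem_interior_slice (hz i k))
        (mem_of_mem_interior_slice (hp i))).sub
      (hf.tendsto_prodMk hz₀lim hyk (fun k => mem_of_mem_interior_slice (hz₀ k))
        (mem_of_mem_interior_slice hx₀))

theorem tendsto_constCoeff_comp (hint : ∀ y ∈ Y, (interior {x | (x, y) ∈ K}).Nonempty)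
    (hlhc : SeqLowerHemicontinuousOn (fun y => interior {x | (x, y) ∈ K}) Y)
    (hf : ContinuousOn f K) (hrep : ∀ y ∈ Y, ∀ x, (x, y) ∈ K → f (x, y) = c₀ y + c y ⬝ᵥ x)
    (hy : y ∈ Y) (hykY : ∀ k, yk k ∈ Y) (hyk : Tendsto yk atTop (𝓝 y)) :
    Tendsto (c₀ ∘ yk) atTop (𝓝 (c₀ y)) := by
  have hc₀ : ∀ {y'}, y' ∈ Y → ∀ {x}, (x, y') ∈ K → c₀ y' = f (x, y') - c y' ⬝ᵥ x :=
    fun hy' _ hx => by rw [hrep _ hy' _ hx]; ring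
  obtain ⟨x₀, hx₀⟩ := hint y hy
  obtain ⟨z₀, hz₀, hz₀lim⟩ := hlhc y hy yk hykY hyk x₀ hx₀
  have hz₀K : ∀ k, (z₀ k, yk k) ∈ K := fun k => mem_of_mem_interior_slice (hz₀ k)
  have hx₀K : (x₀, y) ∈ K := mem_of_mem_interior_slice hx₀
  have hc := tendsto_linearCoeff_comp hint hlhc hf hrep hy hykY hyk
  rw [hc₀ hy hx₀K]
  refine ((hf.tendsto_prodMk hz₀lim hyk hz₀K hx₀K).sub
    (((continuous_fst.dotProduct continuous_snd).tendsto _).comp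
      (hc.prodMk_nhds hz₀lim))).congr fun k => ?_
  exact (hc₀ (hykY k) (hz₀K k)).symm

theorem continuousOn_coeffs_of_seqLowerHemicontinuousOn
    (hint : ∀ y ∈ Y, (interior {x | (x, y) ∈ K}).Nonempty)
    (hlhc : SeqLowerHemicontinuousOn (fun y => interior {x | (x, y) ∈ K}) Y)
    (hf : ContinuousOn f K) (hrep : ∀ y ∈ Y, ∀ x, (x, y) ∈ K → f (x, y) = c₀ y + c y ⬝ᵥ x) :
    ContinuousOn c Y ∧ ContinuousOn c₀ Y :=
  ⟨continuousOn_of_forall_seq_tendsto fun _ hy _ hykY hyk =>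
      tendsto_linearCoeff_comp hint hlhc hf hrep hy hykY hyk,
    continuousOn_of_forall_seq_tendsto fun _ hy _ hykY hyk =>
      tendsto_constCoeff_comp hint hlhc hf hrep hy hykY hyk⟩

end Coefficients

theorem MvPolynomial.exists_abs_sub_eval_lt {σ : Type*} {Y : Set (σ → ℝ)} (hY : IsCompact Y)
    {u : (σ → ℝ) → ℝ} (hu : ContinuousOn u Y) {ε : ℝ} (hε : 0 < ε) :
    ∃ q : MvPolynomial σ ℝ, ∀ y ∈ Y, |u y - eval y q| < ε := by
  have : CompactSpace Y := isCompact_iff_compactSpace.1 hY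
  let coord : σ → C(Y, ℝ) :=
    fun j => ⟨fun y => (y : σ → ℝ) j, (continuous_apply j).comp continuous_subtype_val⟩
  have heval : ∀ q (y : Y), aeval coord q y = eval (y : σ → ℝ) q := fun q y => by
    change ContinuousMap.evalAlgHom ℝ ℝ y (aeval coord q) = _
    rw [comp_aeval_apply]
    rfl
  have hsep : (aeval (R := ℝ) coord).range.SeparatesPoints := by
    intro y₁ y₂ hne
    obtain ⟨j, hj⟩ := Function.ne_iff.1 (Subtype.coe_ne_coe.2 hne)
    exact ⟨_, ⟨coord j, ⟨X j, aeval_X coord j⟩, rfl⟩, hj⟩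
  obtain ⟨⟨g, q, rfl⟩, hg⟩ :=
    ContinuousMap.exists_mem_subalgebra_near_continuous_of_separatesPoints
      _ hsep _ (continuousOn_iff_continuous_domRestrict.1 hu) ε hε
  refine ⟨q, fun y hy => ?_⟩
  rw [abs_sub_comm, ← heval q ⟨y, hy⟩]
  exact hg ⟨y, hy⟩

theorem exists_mvPolynomial_abs_sub_lt_of_continuousOn {n m : ℕ}
    {K : Set ((Fin n → ℝ) × (Fin m → ℝ))} (hK : IsCompact K) {c₀ : (Fin m → ℝ) → ℝ}
    {c : (Fin m → ℝ) → Fin n → ℝ} (hc₀ : ContinuousOn c₀ (Prod.snd '' K))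
    (hc : ContinuousOn c (Prod.snd '' K)) {ε : ℝ} (hε : 0 < ε) :
    ∃ (q₀ : MvPolynomial (Fin m) ℝ) (q : Fin n → MvPolynomial (Fin m) ℝ), ∀ p ∈ K,
      |c₀ p.2 + c p.2 ⬝ᵥ p.1 - (MvPolynomial.eval p.2 q₀ +
        ∑ i, MvPolynomial.eval p.2 (q i) * p.1 i)| < ε := by
  have hY := hK.image continuous_snd
  obtain ⟨R, hR, hRK⟩ := hK.isBounded.exists_pos_norm_le
  set d := ε / (1 + n * R)
  have hd : 0 < d := by positivity
  obtain ⟨q₀, hq₀⟩ := MvPolynomial.exists_abs_sub_eval_lt hY hc₀ hd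
  choose q hq using fun i => MvPolynomial.exists_abs_sub_eval_lt hY
    ((continuous_apply i).comp_continuousOn hc) hd
  refine ⟨q₀, q, fun p hp => ?_⟩
  have hy : p.2 ∈ Prod.snd '' K := mem_image_of_mem _ hp
  have hx : ∀ i, |p.1 i| ≤ R := fun i =>
    (norm_le_pi_norm p.1 i).trans ((norm_fst_le p).trans (hRK p hp))
  calc |c₀ p.2 + c p.2 ⬝ᵥ p.1 -
          (MvPolynomial.eval p.2 q₀ + ∑ i, MvPolynomial.eval p.2 (q i) * p.1 i)|
      = |(c₀ p.2 - MvPolynomial.eval p.2 q₀) +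
          ∑ i, (c p.2 i - MvPolynomial.eval p.2 (q i)) * p.1 i| := by
        rw [Finset.sum_congr rfl fun i _ => sub_mul _ _ (p.1 i), Finset.sum_sub_distrib]
        congr 1
        simp only [dotProduct]
        ring
    _ ≤ |c₀ p.2 - MvPolynomial.eval p.2 q₀| +
          ∑ i, |c p.2 i - MvPolynomial.eval p.2 (q i)| * |p.1 i| := by
        refine (abs_add_le _ _).trans (add_le_add le_rfl ?_)
        exact (Finset.abs_sum_le_sum_abs _ _).trans_eq (by simp only [abs_mul])
    _ < d + ∑ _i : Fin n, d * R := add_lt_add_of_lt_of_le (hq₀ _ hy)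
        (Finset.sum_le_sum fun i _ => mul_le_mul (hq i _ hy).le (hx i) (abs_nonneg _) hd.le)
    _ = ε := by
        simp only [Finset.sum_const, Finset.card_univ, Fintype.card_fin, nsmul_eq_mul, d]
        field_simp

theorem stmt_9_general (n m : ℕ) (K : Set ((Fin n → ℝ) × (Fin m → ℝ)))
    (hKc : IsCompact K)
    (hconv : ∀ y : Fin m → ℝ, Convex ℝ {x : Fin n → ℝ | (x, y) ∈ K})
    (Y : Set (Fin m → ℝ)) (hY : Y = Prod.snd '' K)
    (hint : ∀ y ∈ Y, (interior {x : Fin n → ℝ | (x, y) ∈ K}).Nonempty)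
    (hlhc : ∀ y ∈ Y, ∀ yk : ℕ → (Fin m → ℝ), (∀ k, yk k ∈ Y) →
      Filter.Tendsto yk Filter.atTop (nhds y) →
      ∀ x ∈ interior {x : Fin n → ℝ | (x, y) ∈ K},
        ∃ xk : ℕ → (Fin n → ℝ),
          (∀ k, xk k ∈ interior {x : Fin n → ℝ | (x, yk k) ∈ K}) ∧
          Filter.Tendsto xk Filter.atTop (nhds x))
    (f : (Fin n → ℝ) × (Fin m → ℝ) → ℝ) (hf : ContinuousOn f K)
    (haff : ∀ (y : Fin m → ℝ) (x₁ x₂ : Fin n → ℝ), (x₁, y) ∈ K → (x₂, y) ∈ K →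
      ∀ t ∈ Set.Icc (0:ℝ) 1,
        f (t • x₁ + (1 - t) • x₂, y) = t * f (x₁, y) + (1 - t) * f (x₂, y))
    (ε : ℝ) (hε : 0 < ε) :
    ∃ (c₀ : MvPolynomial (Fin m) ℝ) (c : Fin n → MvPolynomial (Fin m) ℝ),
      ∀ p ∈ K,
        |f p - (MvPolynomial.eval p.2 c₀ +
          ∑ i, MvPolynomial.eval p.2 (c i) * p.1 i)| < ε := by
  subst hY
  choose! a c hrep using fun y (hy : y ∈ Prod.snd '' K) =>
    IsAffineOn.exists_eqOn_const_add_dotProduct (g := fun x => f (x, y)) (hconv y)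
      (fun x₁ h₁ x₂ h₂ => haff y x₁ x₂ h₁ h₂) (hint y hy)
  obtain ⟨hc, ha⟩ := continuousOn_coeffs_of_seqLowerHemicontinuousOn hint hlhc hf hrep
  obtain ⟨q₀, q, hq⟩ := exists_mvPolynomial_abs_sub_lt_of_continuousOn hKc ha hc hε
  refine ⟨q₀, q, fun p hp => ?_⟩
  rw [hrep p.2 (mem_image_of_mem _ hp) p.1 hp]
  exact hq p hp

/-- Stone–Weierstrass for partial convexity: on a compact regular partially
convex set, partially affine polynomials are sup-norm dense in the space of
continuous partially affine functions. -/
theorem stmt_9 (n m : ℕ) (K : Set ((Fin n → ℝ) × (Fin m → ℝ)))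
    (hKc : IsCompact K) (hKcl : IsClosed K)
    (hconv : ∀ y : Fin m → ℝ, Convex ℝ {x : Fin n → ℝ | (x, y) ∈ K})
    (Y : Set (Fin m → ℝ)) (hY : Y = Prod.snd '' K)
    (hint : ∀ y ∈ Y, (interior {x : Fin n → ℝ | (x, y) ∈ K}).Nonempty)
    (hlhc : ∀ y ∈ Y, ∀ yk : ℕ → (Fin m → ℝ), (∀ k, yk k ∈ Y) →
      Filter.Tendsto yk Filter.atTop (nhds y) →
      ∀ x ∈ interior {x : Fin n → ℝ | (x, y) ∈ K},
        ∃ xk : ℕ → (Fin n → ℝ),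
          (∀ k, xk k ∈ interior {x : Fin n → ℝ | (x, yk k) ∈ K}) ∧
          Filter.Tendsto xk Filter.atTop (nhds x))
    (f : (Fin n → ℝ) × (Fin m → ℝ) → ℝ) (hf : ContinuousOn f K)
    (haff : ∀ (y : Fin m → ℝ) (x₁ x₂ : Fin n → ℝ), (x₁, y) ∈ K → (x₂, y) ∈ K →
      ∀ t ∈ Set.Icc (0:ℝ) 1,
        f (t • x₁ + (1 - t) • x₂, y) = t * f (x₁, y) + (1 - t) * f (x₂, y))
    (ε : ℝ) (hε : 0 < ε) :
    ∃ (c₀ : MvPolynomial (Fin m) ℝ) (c : Fin n → MvPolynomial (Fin m) ℝ),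
      ∀ p ∈ K,
        |f p - (MvPolynomial.eval p.2 c₀ +
          ∑ i, MvPolynomial.eval p.2 (c i) * p.1 i)| < ε :=
  stmt_9_general n m K hKc hconv Y hY hint hlhc f hf haff ε hε
end

section
/- There exists a closed partially convex set K ⊆ ℝ² (namely K = {(x,y) | x ≥ −e^{y²}}) and a point z ∉ K (namely z = (−2, 0)) such that no polynomial of the form p(x,y) = v(y)x + c(y), with v, c real polynomials, satisfies p ≥ 0 on K and p(z) < 0. -/
/-- Separation by partially affine polynomials can fail for unbounded closed
partially convex sets: for `K = {(x,y) | x ≥ −e^{y²}}` and `z = (−2,0) ∉ K`, no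
polynomial `p(x,y) = v(y)x + c(y)` is nonnegative on `K` and negative at `z`. -/
theorem stmt_12 :
    ∃ (K : Set (ℝ × ℝ)) (z : ℝ × ℝ),
      K = {p : ℝ × ℝ | -Real.exp (p.2 ^ 2) ≤ p.1} ∧ z = (-2, 0) ∧
      IsClosed K ∧ (∀ y : ℝ, Convex ℝ {x : ℝ | (x, y) ∈ K}) ∧ z ∉ K ∧
      ∀ v c : Polynomial ℝ,
        (∀ p ∈ K, 0 ≤ v.eval p.2 * p.1 + c.eval p.2) →
        ¬ v.eval z.2 * z.1 + c.eval z.2 < 0 := by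
  refine ⟨_, _, rfl, rfl, ?_, ?_, ?_, ?_⟩
  · exact isClosed_le (by continuity) (by continuity)
  · intro y
    have : {x : ℝ | (x, y) ∈ {p : ℝ × ℝ | -Real.exp (p.2 ^ 2) ≤ p.1}}
        = Set.Ici (-Real.exp (y ^ 2)) := rfl
    rw [this]; exact convex_Ici _
  · simp only [Set.mem_setOf_eq, not_le]
    norm_num [Real.exp_zero]
  · intro v c h
    simp only [not_lt]
    -- v is nonnegative everywhere
    have hv0 : ∀ y : ℝ, 0 ≤ v.eval y := by
      intro y
      by_contra hv
      push_neg at hv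
      set a := v.eval y with ha
      set b := c.eval y with hb
      set x : ℝ := max 0 ((-b - 1) / a) with hx
      have hmem : (x, y) ∈ {p : ℝ × ℝ | -Real.exp (p.2 ^ 2) ≤ p.1} := by
        have : (0:ℝ) ≤ x := le_max_left _ _
        have he : (0:ℝ) < Real.exp (y ^ 2) := Real.exp_pos _
        simp only [Set.mem_setOf_eq]; linarith
      have h1 := h (x, y) hmem
      have hxq : (-b - 1) / a ≤ x := le_max_right _ _
      have h2 : a * x ≤ a * ((-b - 1) / a) :=
        mul_le_mul_of_nonpos_left hxq hv.le
      have h3 : a * ((-b - 1) / a) = -b - 1 :=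
        mul_div_cancel₀ _ (ne_of_lt hv)
      simp only at h1
      linarith
    -- c(y) ≥ v(y) e^{y²}
    have hc : ∀ y : ℝ, v.eval y * Real.exp (y ^ 2) ≤ c.eval y := by
      intro y
      have := h (-Real.exp (y ^ 2), y) (by simp [Set.mem_setOf_eq])
      simp only at this
      linarith
    -- v(0) = 0
    have hvz : v.eval 0 = 0 := by
      by_contra hne
      have hpos : 0 < v.eval 0 := (hv0 0).lt_of_ne (Ne.symm hne)
      set δ : ℝ := min (v.eval 0) 1 with hδdef
      have hδ : 0 < δ := lt_min hpos one_pos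
      have hev : ∀ᶠ y in Filter.atTop, δ ≤ v.eval y := by
        by_cases hd : v.natDegree = 0
        · have hC : v = Polynomial.C (v.coeff 0) := Polynomial.eq_C_of_natDegree_eq_zero hd
          filter_upwards with y
          have h1 : v.eval y = v.eval 0 := by rw [hC]; simp
          rw [h1]; exact min_le_left _ _
        · have hdeg : 0 < v.degree := Polynomial.natDegree_pos_iff_degree_pos.mp
            (Nat.pos_of_ne_zero hd)
          have habs := Polynomial.abs_tendsto_atTop v hdeg
          filter_upwards [habs.eventually_ge_atTop 1] with y hy
          rw [abs_of_nonneg (hv0 y)] at hy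
          exact le_trans (min_le_right _ _) hy
      have h1 : ∀ᶠ y in Filter.atTop, δ ≤ c.eval y / Real.exp y := by
        filter_upwards [hev, Filter.eventually_ge_atTop (1:ℝ)] with y hy hy1
        have he : Real.exp y ≤ Real.exp (y ^ 2) := Real.exp_le_exp.2 (by nlinarith)
        have hep : (0:ℝ) < Real.exp y := Real.exp_pos _
        have hep2 : (0:ℝ) < Real.exp (y ^ 2) := Real.exp_pos _
        have h4 : δ * Real.exp (y ^ 2) ≤ v.eval y * Real.exp (y ^ 2) :=
          mul_le_mul_of_nonneg_right hy hep2.le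
        rw [le_div_iff₀ hep]
        have := hc y
        nlinarith
      have h2 := Polynomial.tendsto_div_exp_atTop c
      have h3 : ∀ᶠ y in Filter.atTop, c.eval y / Real.exp y < δ :=
        h2.eventually_lt_const hδ
      obtain ⟨y, hy1, hy2⟩ := (h1.and h3).exists
      linarith
    have h0 := hc 0
    norm_num [hvz] at h0 ⊢
    linarith
end

section
/- Define K = {(x,y) ∈ ℝ² | y ∈ [0,1], |x| ≤ y} and f : K → ℝ by f(x,y) = x/√y for y > 0 and f(x,0) = 0. Then f is continuous on K and affine in x for each fixed y, but f admits no extension to a continuous function F on [−1,1] × [0,1] that is affine in x for each fixed y. -/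
/-- On `K = {(x,y) | y ∈ [0,1], |x| ≤ y}`, the function `f(x,y) = x/√y`
(with `f(x,0) = 0`) is continuous and affine in `x` for each fixed `y`, but has
no continuous extension to `[−1,1] × [0,1]` that is affine in `x`. -/
theorem stmt_13 (K : Set (ℝ × ℝ)) (hK : K = {p : ℝ × ℝ | p.2 ∈ Set.Icc (0:ℝ) 1 ∧ |p.1| ≤ p.2})
    (f : ℝ × ℝ → ℝ)
    (hf : f = fun p => if p.2 = 0 then 0 else p.1 / Real.sqrt p.2) :
    ContinuousOn f K ∧
    (∀ (y x₁ x₂ : ℝ), (x₁, y) ∈ K → (x₂, y) ∈ K → ∀ t ∈ Set.Icc (0:ℝ) 1,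
      f (t * x₁ + (1 - t) * x₂, y) = t * f (x₁, y) + (1 - t) * f (x₂, y)) ∧
    ¬ ∃ F : ℝ × ℝ → ℝ,
        ContinuousOn F (Set.Icc (-1:ℝ) 1 ×ˢ Set.Icc (0:ℝ) 1) ∧
        (∀ p ∈ K, F p = f p) ∧
        (∀ y ∈ Set.Icc (0:ℝ) 1, ∀ x₁ ∈ Set.Icc (-1:ℝ) 1, ∀ x₂ ∈ Set.Icc (-1:ℝ) 1,
          ∀ t ∈ Set.Icc (0:ℝ) 1,
            F (t * x₁ + (1 - t) * x₂, y) = t * F (x₁, y) + (1 - t) * F (x₂, y)) := by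
  subst hK hf
  refine ⟨?_, ?_, ?_⟩
  · -- continuity on K
    intro p hp
    obtain ⟨⟨hy0, hy1⟩, hxy⟩ := hp
    rcases eq_or_lt_of_le hy0 with h0 | h0
    · -- y = 0, hence x = 0; squeeze by √y
      have hx : p.1 = 0 := by
        have := hxy
        rw [← h0] at this
        simpa [abs_nonpos_iff] using this
      have hval : (if p.2 = 0 then (0:ℝ) else p.1 / Real.sqrt p.2) = 0 := by
        simp [← h0]
      rw [ContinuousWithinAt, hval]
      have hb : ∀ q ∈ {p : ℝ × ℝ | p.2 ∈ Set.Icc (0:ℝ) 1 ∧ |p.1| ≤ p.2},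
          |(if q.2 = 0 then (0:ℝ) else q.1 / Real.sqrt q.2)| ≤ Real.sqrt q.2 := by
        intro q hq
        obtain ⟨⟨hq0, _⟩, hqxy⟩ := hq
        by_cases h : q.2 = 0
        · simp [h]
        · rw [if_neg h, abs_div, abs_of_nonneg (Real.sqrt_nonneg _)]
          rw [div_le_iff₀ (Real.sqrt_pos.mpr (lt_of_le_of_ne hq0 (Ne.symm h)))]
          calc |q.1| ≤ q.2 := hqxy
            _ = Real.sqrt q.2 * Real.sqrt q.2 := (Real.mul_self_sqrt hq0).symm
      have hsq : Filter.Tendsto (fun q : ℝ × ℝ => Real.sqrt q.2)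
          (nhdsWithin p {p : ℝ × ℝ | p.2 ∈ Set.Icc (0:ℝ) 1 ∧ |p.1| ≤ p.2}) (nhds 0) := by
        have : Filter.Tendsto (fun q : ℝ × ℝ => Real.sqrt q.2) (nhds p)
            (nhds (Real.sqrt p.2)) :=
          (Real.continuous_sqrt.comp continuous_snd).tendsto p
        rw [← h0] at this
        simpa using this.mono_left nhdsWithin_le_nhds
      rw [show (0:ℝ) = -0 from (neg_zero).symm] at hsq
      refine squeeze_zero_norm' ?_ (by simpa using hsq)
      filter_upwards [self_mem_nhdsWithin] with q hq using hb q hq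
    · -- y > 0
      have hne : p.2 ≠ 0 := ne_of_gt h0
      have hcont : ContinuousAt (fun q : ℝ × ℝ => q.1 / Real.sqrt q.2) p := by
        apply ContinuousAt.div
        · exact continuous_fst.continuousAt
        · exact (Real.continuous_sqrt.comp continuous_snd).continuousAt
        · exact ne_of_gt (Real.sqrt_pos.mpr h0)
      have heq : (fun q : ℝ × ℝ => if q.2 = 0 then (0:ℝ) else q.1 / Real.sqrt q.2)
          =ᶠ[nhds p] fun q => q.1 / Real.sqrt q.2 := by
        have : {q : ℝ × ℝ | q.2 ≠ 0} ∈ nhds p :=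
          (isOpen_ne_fun continuous_snd continuous_const).mem_nhds hne
        filter_upwards [this] with q hq
        simp [hq]
      exact ((hcont.congr heq.symm)).continuousWithinAt
  · -- affinity on K
    intro y x₁ x₂ h₁ h₂ t ht
    by_cases h : y = 0
    · obtain ⟨_, hx1⟩ := h₁
      obtain ⟨_, hx2⟩ := h₂
      subst h
      have e1 : x₁ = 0 := by simpa [abs_nonpos_iff] using hx1
      have e2 : x₂ = 0 := by simpa [abs_nonpos_iff] using hx2
      simp [e1, e2]
    · simp only [if_neg h]
      ring
  · -- no extension
    rintro ⟨F, hFc, hFK, hA⟩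
    have key : ∀ y : ℝ, 0 < y → y ≤ 1 → F (1, y) = Real.sqrt y / y := by
      intro y hy0 hy1
      have hyI : y ∈ Set.Icc (0:ℝ) 1 := ⟨le_of_lt hy0, hy1⟩
      have h1 : (1:ℝ) ∈ Set.Icc (-1:ℝ) 1 := by norm_num
      have h0 : (0:ℝ) ∈ Set.Icc (-1:ℝ) 1 := by norm_num
      have := hA y hyI 1 h1 0 h0 y hyI
      rw [mul_one, mul_zero, add_zero] at this
      have hKy : ((y:ℝ), y) ∈ {p : ℝ × ℝ | p.2 ∈ Set.Icc (0:ℝ) 1 ∧ |p.1| ≤ p.2} :=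
        ⟨hyI, by rw [abs_of_nonneg hy0.le]⟩
      have hK0 : ((0:ℝ), y) ∈ {p : ℝ × ℝ | p.2 ∈ Set.Icc (0:ℝ) 1 ∧ |p.1| ≤ p.2} :=
        ⟨hyI, by simp [hy0.le]⟩
      have e1 : F (y, y) = y / Real.sqrt y := by
        rw [hFK _ hKy]; simp [ne_of_gt hy0]
      have e0 : F (0, y) = 0 := by
        rw [hFK _ hK0]; simp [ne_of_gt hy0]
      rw [e1, e0, mul_zero, add_zero, Real.div_sqrt] at this
      have := this.symm
      field_simp at this ⊢
      linarith [this]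
    -- continuity of y ↦ F(1,y) at 0 within [0,1]
    have hmem : ((1:ℝ), (0:ℝ)) ∈ Set.Icc (-1:ℝ) 1 ×ˢ Set.Icc (0:ℝ) 1 := by
      constructor <;> norm_num
    have hcw : ContinuousWithinAt F (Set.Icc (-1:ℝ) 1 ×ˢ Set.Icc (0:ℝ) 1) (1, 0) :=
      hFc _ hmem
    -- sequence yₙ = 1/(n+1)²
    set u : ℕ → ℝ := fun n => (1 / (n + 1 : ℝ)) ^ 2 with hu
    have hu0 : ∀ n, 0 < u n := fun n => by positivity
    have hu1 : ∀ n, u n ≤ 1 := by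
      intro n
      rw [hu]
      have h1 : (1:ℝ) ≤ (n + 1 : ℝ) := by exact_mod_cast Nat.one_le_iff_ne_zero.mpr (Nat.succ_ne_zero n)
      have : (1 / (n + 1 : ℝ)) ≤ 1 := by
        rw [div_le_one (by positivity)]; exact h1
      calc (1 / (n + 1 : ℝ)) ^ 2 ≤ 1 ^ 2 := by
            apply pow_le_pow_left₀ (by positivity) this
          _ = 1 := one_pow 2
    have hval : ∀ n, F (1, u n) = (n + 1 : ℝ) := by
      intro n
      rw [key (u n) (hu0 n) (hu1 n)]
      have hs : Real.sqrt (u n) = 1 / (n + 1 : ℝ) := by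
        rw [hu]
        exact Real.sqrt_sq (by positivity)
      rw [hs, hu]
      field_simp
    have htend : Filter.Tendsto (fun n => F (1, u n)) Filter.atTop (nhds (F (1, 0))) := by
      apply hcw.tendsto.comp
      rw [tendsto_nhdsWithin_iff]
      constructor
      · have hu0' : Filter.Tendsto u Filter.atTop (nhds 0) := by
          have : Filter.Tendsto (fun n : ℕ => (1 / (n + 1 : ℝ))) Filter.atTop (nhds 0) :=
            tendsto_one_div_add_atTop_nhds_zero_nat
          simpa [hu, sq] using (this.mul this)
        exact (tendsto_const_nhds (x := (1:ℝ))).prodMk_nhds hu0'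
      · filter_upwards with n
        exact ⟨by norm_num, (hu0 n).le, hu1 n⟩
    have hatTop : Filter.Tendsto (fun n => F (1, u n)) Filter.atTop Filter.atTop := by
      simp only [hval]
      exact Filter.tendsto_atTop_add_const_right _ 1 tendsto_natCast_atTop_atTop
    exact (not_tendsto_nhds_of_tendsto_atTop hatTop _) htend
end

section
/- Let p be a noncommutative polynomial in variables (x, y) and let K = (K_n) be a y²-convex free set. If p(V*(X,Y)V) = V* p(X,Y) V holds for all y²-pairs ((X,Y), V) with (X,Y) ∈ K, then for every level n, all (X₁,Y),(X₂,Y) ∈ K_n and t ∈ [0,1]: p(tX₁+(1−t)X₂, Y) = t p(X₁,Y) + (1−t) p(X₂,Y). -/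
/-!
Compress the direct sum `(Z, W) = (X₁ ⊕ X₂, Y ⊕ Y)` along `V = (√t I, √(1-t) I)*`. Since
`V* (A ⊕ B) V = t A + (1-t) B`, we get `V* W V = Y` and `V* W² V = Y² = (V* W V)²`, so
`((Z, W), V)` is a `y²`-pair with `V* (Z, W) V = (t X₁ + (1-t) X₂, Y)`. Polynomial evaluation
respects direct sums, hence `p(t X₁ + (1-t) X₂, Y) = V* (p(X₁, Y) ⊕ p(X₂, Y)) V
= t p(X₁, Y) + (1-t) p(X₂, Y)`.
-/

open Matrix

/-- Evaluation of a noncommutative polynomial `p` in variables `(x, y)` at a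
tuple of matrices `(X, Y)`. -/
noncomputable def ncEval {g h N : ℕ} (p : FreeAlgebra ℂ (Fin g ⊕ Fin h))
    (X : Fin g → Matrix (Fin N) (Fin N) ℂ) (Y : Fin h → Matrix (Fin N) (Fin N) ℂ) :
    Matrix (Fin N) (Fin N) ℂ :=
  FreeAlgebra.lift ℂ (Sum.elim X Y) p

namespace Matrix

variable {α m n : Type*} [Fintype m] [Fintype n] [DecidableEq m] [DecidableEq n]

variable (α m n) in
def fromBlocksDiagAlgHom [CommSemiring α] :
    Matrix m m α × Matrix n n α →ₐ[α] Matrix (m ⊕ n) (m ⊕ n) α where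
  toFun P := fromBlocks P.1 0 0 P.2
  map_one' := fromBlocks_one
  map_mul' P Q := by simp [fromBlocks_multiply]
  map_zero' := fromBlocks_zero
  map_add' P Q := by simp [fromBlocks_add]
  commutes' c := by simp [algebraMap_eq_diagonal, fromBlocks_diagonal]

theorem fromRows_conjTranspose_mul_fromBlocks_mul [CommRing α] [StarRing α] (a b : α)
    (A B : Matrix n n α) :
    (fromRows (a • 1) (b • 1) : Matrix (n ⊕ n) n α)ᴴ * fromBlocks A 0 0 B *
        (fromRows (a • 1) (b • 1) : Matrix (n ⊕ n) n α) =
      (star a * a) • A + (star b * b) • B := by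
  rw [conjTranspose_fromRows_eq_fromCols_conjTranspose, fromCols_mul_fromBlocks,
    fromCols_mul_fromRows]
  simp [conjTranspose_smul, smul_smul, mul_comm]

end Matrix

noncomputable def directSumAlgHom (N M : ℕ) :
    Matrix (Fin N) (Fin N) ℂ × Matrix (Fin M) (Fin M) ℂ →ₐ[ℂ]
      Matrix (Fin (N + M)) (Fin (N + M)) ℂ :=
  (reindexAlgEquiv ℂ ℂ finSumFinEquiv).toAlgHom.comp (fromBlocksDiagAlgHom ℂ _ _)

theorem directSumAlgHom_apply {N M : ℕ} (A : Matrix (Fin N) (Fin N) ℂ)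
    (B : Matrix (Fin M) (Fin M) ℂ) :
    directSumAlgHom N M (A, B) = reindex finSumFinEquiv finSumFinEquiv (fromBlocks A 0 0 B) :=
  rfl

theorem ncEval_algHom_prod {g h N M K : ℕ} (p : FreeAlgebra ℂ (Fin g ⊕ Fin h))
    (φ : Matrix (Fin N) (Fin N) ℂ × Matrix (Fin M) (Fin M) ℂ →ₐ[ℂ] Matrix (Fin K) (Fin K) ℂ)
    (X₁ : Fin g → Matrix (Fin N) (Fin N) ℂ) (Y₁ : Fin h → Matrix (Fin N) (Fin N) ℂ)
    (X₂ : Fin g → Matrix (Fin M) (Fin M) ℂ) (Y₂ : Fin h → Matrix (Fin M) (Fin M) ℂ) :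
    ncEval p (fun j => φ (X₁ j, X₂ j)) (fun j => φ (Y₁ j, Y₂ j)) =
      φ (ncEval p X₁ Y₁, ncEval p X₂ Y₂) := by
  have : FreeAlgebra.lift ℂ (Sum.elim (fun j => φ (X₁ j, X₂ j)) (fun j => φ (Y₁ j, Y₂ j))) =
      φ.comp ((FreeAlgebra.lift ℂ (Sum.elim X₁ Y₁)).prod
        (FreeAlgebra.lift ℂ (Sum.elim X₂ Y₂))) := by
    ext (i | i) <;> simp
  exact congrArg (· p) this

noncomputable def convexIsometry (N : ℕ) (t : ℝ) : Matrix (Fin (N + N)) (Fin N) ℂ :=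
  reindex finSumFinEquiv (Equiv.refl _) (fromRows ((√t : ℂ) • 1) ((√(1 - t) : ℂ) • 1))

section convexIsometry

variable {N : ℕ} {t : ℝ}

theorem convexIsometry_compress_directSum (ht : t ∈ Set.Icc (0 : ℝ) 1)
    (A B : Matrix (Fin N) (Fin N) ℂ) :
    (convexIsometry N t)ᴴ * directSumAlgHom N N (A, B) * convexIsometry N t =
      (t : ℂ) • A + ((1 - t : ℝ) : ℂ) • B := by
  rw [convexIsometry, directSumAlgHom_apply, conjTranspose_reindex, reindex_apply,
    reindex_apply, reindex_apply, submatrix_mul_equiv, submatrix_mul_equiv, Equiv.refl_symm,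
    Equiv.coe_refl, submatrix_id_id, fromRows_conjTranspose_mul_fromBlocks_mul]
  simp only [Complex.star_def, Complex.conj_ofReal, ← Complex.ofReal_mul,
    Real.mul_self_sqrt ht.1, Real.mul_self_sqrt (sub_nonneg.2 ht.2)]

theorem convexIsometry_compress_directSum_self (ht : t ∈ Set.Icc (0 : ℝ) 1)
    (A : Matrix (Fin N) (Fin N) ℂ) :
    (convexIsometry N t)ᴴ * directSumAlgHom N N (A, A) * convexIsometry N t = A := by
  rw [convexIsometry_compress_directSum ht, ← add_smul]
  push_cast
  simp

theorem conjTranspose_convexIsometry_mul_self (ht : t ∈ Set.Icc (0 : ℝ) 1) :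
    (convexIsometry N t)ᴴ * convexIsometry N t = 1 := by
  have := convexIsometry_compress_directSum_self ht (1 : Matrix (Fin N) (Fin N) ℂ)
  rwa [Prod.mk_one_one, map_one, Matrix.mul_one] at this

end convexIsometry

theorem stmt_19_general (g h : ℕ) (p : FreeAlgebra ℂ (Fin g ⊕ Fin h))
    (K : ∀ N : ℕ, Set ((Fin g → Matrix (Fin N) (Fin N) ℂ) ×
      (Fin h → Matrix (Fin N) (Fin N) ℂ)))
    -- K is closed under direct sums
    (hdsum : ∀ N M, ∀ P ∈ K N, ∀ Q ∈ K M,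
      ((fun j => Matrix.reindex finSumFinEquiv finSumFinEquiv
          (Matrix.fromBlocks (P.1 j) 0 0 (Q.1 j)),
        fun j => Matrix.reindex finSumFinEquiv finSumFinEquiv
          (Matrix.fromBlocks (P.2 j) 0 0 (Q.2 j))) ∈ K (N + M)))
    -- p is a y²-affine map on K
    (hy2aff : ∀ N r : ℕ, ∀ P ∈ K N, ∀ V : Matrix (Fin N) (Fin r) ℂ,
      Vᴴ * V = 1 →
      (∀ j, Vᴴ * (P.2 j * P.2 j) * V = (Vᴴ * P.2 j * V) * (Vᴴ * P.2 j * V)) →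
      ncEval p (fun j => Vᴴ * P.1 j * V) (fun j => Vᴴ * P.2 j * V) =
        Vᴴ * ncEval p P.1 P.2 * V) :
    ∀ N : ℕ, ∀ X₁ X₂ : Fin g → Matrix (Fin N) (Fin N) ℂ,
      ∀ Y : Fin h → Matrix (Fin N) (Fin N) ℂ,
      (X₁, Y) ∈ K N → (X₂, Y) ∈ K N → ∀ t : ℝ, t ∈ Set.Icc (0:ℝ) 1 →
        ncEval p (fun j => (t : ℂ) • X₁ j + ((1 - t : ℝ) : ℂ) • X₂ j) Y =
          (t : ℂ) • ncEval p X₁ Y + ((1 - t : ℝ) : ℂ) • ncEval p X₂ Y := by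
  intro N X₁ X₂ Y hX₁ hX₂ t ht
  have hmem : ((fun j => directSumAlgHom N N (X₁ j, X₂ j)),
      fun j => directSumAlgHom N N (Y j, Y j)) ∈ K (N + N) :=
    hdsum N N (X₁, Y) hX₁ (X₂, Y) hX₂
  have hy2 : ∀ j, (convexIsometry N t)ᴴ * (directSumAlgHom N N (Y j, Y j) *
      directSumAlgHom N N (Y j, Y j)) * convexIsometry N t =
      ((convexIsometry N t)ᴴ * directSumAlgHom N N (Y j, Y j) * convexIsometry N t) *
        ((convexIsometry N t)ᴴ * directSumAlgHom N N (Y j, Y j) * convexIsometry N t) := by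
    intro j
    simp only [← map_mul, Prod.mk_mul_mk, convexIsometry_compress_directSum_self ht]
  simpa only [ncEval_algHom_prod, convexIsometry_compress_directSum_self ht,
    convexIsometry_compress_directSum ht] using
    hy2aff _ _ _ hmem _ (conjTranspose_convexIsometry_mul_self ht) hy2

/-- If a noncommutative polynomial `p` is a `y²`-affine map on a `y²`-convex
free set `K` (i.e. `p(V*(X,Y)V) = V* p(X,Y) V` for all `y²`-pairs), then it is
affine in `x` for every fixed `y` at every level of `K`. -/
theorem stmt_19 (g h : ℕ) (p : FreeAlgebra ℂ (Fin g ⊕ Fin h))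
    (K : ∀ N : ℕ, Set ((Fin g → Matrix (Fin N) (Fin N) ℂ) ×
      (Fin h → Matrix (Fin N) (Fin N) ℂ)))
    -- K consists of tuples of self-adjoint matrices
    (hherm : ∀ N, ∀ P ∈ K N, (∀ j, (P.1 j).IsHermitian) ∧ ∀ j, (P.2 j).IsHermitian)
    -- K is closed under direct sums
    (hdsum : ∀ N M, ∀ P ∈ K N, ∀ Q ∈ K M,
      ((fun j => Matrix.reindex finSumFinEquiv finSumFinEquiv
          (Matrix.fromBlocks (P.1 j) 0 0 (Q.1 j)),
        fun j => Matrix.reindex finSumFinEquiv finSumFinEquiv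
          (Matrix.fromBlocks (P.2 j) 0 0 (Q.2 j))) ∈ K (N + M)))
    -- K is closed under unitary conjugation
    (hunitary : ∀ N, ∀ P ∈ K N, ∀ U : Matrix (Fin N) (Fin N) ℂ,
      Uᴴ * U = 1 → U * Uᴴ = 1 →
      ((fun j => Uᴴ * P.1 j * U, fun j => Uᴴ * P.2 j * U) ∈ K N))
    -- K is y²-convex: closed under compressions along y²-pairs
    (hconvex : ∀ N r : ℕ, ∀ P ∈ K N, ∀ V : Matrix (Fin N) (Fin r) ℂ,
      Vᴴ * V = 1 →
      (∀ j, Vᴴ * (P.2 j * P.2 j) * V = (Vᴴ * P.2 j * V) * (Vᴴ * P.2 j * V)) →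
      ((fun j => Vᴴ * P.1 j * V, fun j => Vᴴ * P.2 j * V) ∈ K r))
    -- p is a y²-affine map on K
    (hy2aff : ∀ N r : ℕ, ∀ P ∈ K N, ∀ V : Matrix (Fin N) (Fin r) ℂ,
      Vᴴ * V = 1 →
      (∀ j, Vᴴ * (P.2 j * P.2 j) * V = (Vᴴ * P.2 j * V) * (Vᴴ * P.2 j * V)) →
      ncEval p (fun j => Vᴴ * P.1 j * V) (fun j => Vᴴ * P.2 j * V) =
        Vᴴ * ncEval p P.1 P.2 * V) :
    ∀ N : ℕ, ∀ X₁ X₂ : Fin g → Matrix (Fin N) (Fin N) ℂ,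
      ∀ Y : Fin h → Matrix (Fin N) (Fin N) ℂ,
      (X₁, Y) ∈ K N → (X₂, Y) ∈ K N → ∀ t : ℝ, t ∈ Set.Icc (0:ℝ) 1 →
        ncEval p (fun j => (t : ℂ) • X₁ j + ((1 - t : ℝ) : ℂ) • X₂ j) Y =
          (t : ℂ) • ncEval p X₁ Y + ((1 - t : ℝ) : ℂ) • ncEval p X₂ Y :=
  stmt_19_general g h p K hdsum hy2aff
end
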